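/- Weyl's inequality: for real symmetric n×n matrices A and B, and indices i, j ≥ 1 with i + j - 1 ≤ n, the (i+j-1)-th largest eigenvalue of A + B is at most the sum of the i-th largest eigenvalue of A and the j-th largest eigenvalue of B. -/

import Mathlib

/-!
The eigenvectors of `A` with eigenvalue at most `λᵢ(A)` span a subspace of dimension at least
`n - i + 1` on which `⟪x, A x⟫ ≤ λᵢ(A) ‖x‖²`; likewise for `B` and `λⱼ(B)`. The eigenvectors of
`A + B` with eigenvalue at least `λᵢ₊ⱼ₋₁(A + B)` span a subspace of dimension at least `i + j - 1`
on which the reverse inequality holds. These dimensions add up to `2n + 1 > 2n`, so the three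
subspaces share a nonzero vector `x`, and comparing the three Rayleigh quotients at `x` gives the
inequality.
-/

open Matrix

/-- The eigenvalues of a Hermitian matrix, sorted in decreasing order,
indexed by `Fin n` (index 0 is the largest eigenvalue). -/
noncomputable def eigDesc {n : ℕ} (A : Matrix (Fin n) (Fin n) ℝ)
    (hA : A.IsHermitian) : Fin n → ℝ :=
  fun k => (hA.eigenvalues ∘ Tuple.sort hA.eigenvalues) k.rev

open Finset Module Submodule
open scoped RealInnerProductSpace

namespace Tuple

variable {α : Type*} [LinearOrder α] {n : ℕ}

theorem le_card_filter_le_sort (f : Fin n → α) (m : Fin n) :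
    m.val + 1 ≤ #{k | f k ≤ f (sort f m)} := by
  rw [← Fin.card_Iic]
  refine card_le_card_of_injOn (sort f) (fun k hk => ?_) (sort f).injective.injOn
  simpa using monotone_sort f (mem_Iic.mp hk)

theorem le_card_filter_sort_le (f : Fin n → α) (m : Fin n) :
    n - m.val ≤ #{k | f (sort f m) ≤ f k} := by
  rw [← Fin.card_Ici]
  refine card_le_card_of_injOn (sort f) (fun k hk => ?_) (sort f).injective.injOn
  simpa using monotone_sort f (mem_Ici.mp hk)

end Tuple

theorem Submodule.finrank_add_finrank_le_add_finrank_inf {K V : Type*} [DivisionRing K]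
    [AddCommGroup V] [Module K V] [FiniteDimensional K V] (U W : Submodule K V) :
    finrank K U + finrank K W ≤ finrank K V + finrank K ↥(U ⊓ W) := by
  rw [← finrank_sup_add_finrank_inf_eq]
  exact Nat.add_le_add_right (finrank_le _) _

theorem Submodule.exists_mem_inf_inf_ne_zero {K V : Type*} [DivisionRing K]
    [AddCommGroup V] [Module K V] [FiniteDimensional K V] (U W X : Submodule K V)
    (h : 2 * finrank K V < finrank K U + finrank K W + finrank K X) :
    ∃ x ∈ U ⊓ W ⊓ X, x ≠ 0 := by
  have hUW := finrank_add_finrank_le_add_finrank_inf U W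
  have hUWX := finrank_add_finrank_le_add_finrank_inf (U ⊓ W) X
  refine (Submodule.ne_bot_iff _).mp fun hbot => ?_
  rw [hbot, finrank_bot] at hUWX
  omega

namespace OrthonormalBasis

variable {ι E : Type*} [Fintype ι] [NormedAddCommGroup E] [InnerProductSpace ℝ E]
  (u : OrthonormalBasis ι ℝ E)

theorem inner_eq_zero_of_mem_span_image {S : Set ι} {x : E} (hx : x ∈ span ℝ (u '' S))
    {k : ι} (hk : k ∉ S) : ⟪u k, x⟫ = 0 := by
  have hle : span ℝ (u '' S) ≤ LinearMap.ker (innerₛₗ ℝ (u k)) := by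
    rw [span_le]
    rintro _ ⟨l, hl, rfl⟩
    exact u.orthonormal.2 fun h => hk (h ▸ hl)
  exact hle hx

theorem finrank_span_image (S : Finset ι) : finrank ℝ (span ℝ (u '' S)) = #S := by
  rw [Set.image_eq_range]
  exact (finrank_span_eq_card (u.orthonormal.linearIndependent.comp _ Subtype.val_injective)).trans
    (by simp)

variable {u} {T : E →ₗ[ℝ] E} {f : ι → ℝ}

theorem inner_apply_self_eq_sum (hT : ∀ k, T (u k) = f k • u k) (x : E) :
    ⟪x, T x⟫ = ∑ k, f k * ⟪u k, x⟫ ^ 2 := by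
  nth_rw 2 [← u.sum_repr' x]
  simp only [map_sum, map_smul, hT, smul_smul, inner_sum, real_inner_smul_right]
  refine sum_congr rfl fun k _ => ?_
  rw [real_inner_comm]
  ring

theorem inner_apply_self_le_of_mem_span (hT : ∀ k, T (u k) = f k • u k) {S : Set ι} {μ : ℝ}
    (hS : ∀ k ∈ S, f k ≤ μ) {x : E} (hx : x ∈ span ℝ (u '' S)) :
    ⟪x, T x⟫ ≤ μ * ‖x‖ ^ 2 := by
  rw [inner_apply_self_eq_sum hT, ← u.sum_sq_norm_inner_right, mul_sum]
  refine sum_le_sum fun k _ => ?_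
  by_cases hk : k ∈ S
  · rw [Real.norm_eq_abs, sq_abs]
    exact mul_le_mul_of_nonneg_right (hS k hk) (sq_nonneg _)
  · simp [u.inner_eq_zero_of_mem_span_image hx hk]

theorem mul_norm_sq_le_inner_apply_self_of_mem_span (hT : ∀ k, T (u k) = f k • u k)
    {S : Set ι} {μ : ℝ} (hS : ∀ k ∈ S, μ ≤ f k) {x : E} (hx : x ∈ span ℝ (u '' S)) :
    μ * ‖x‖ ^ 2 ≤ ⟪x, T x⟫ := by
  have := inner_apply_self_le_of_mem_span (T := -T) (f := -f) (μ := -μ)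
    (fun k => by simp [hT]) (fun k hk => neg_le_neg (hS k hk)) hx
  simpa [inner_neg_right] using this

end OrthonormalBasis

namespace Matrix.IsHermitian

theorem toEuclideanLin_eigenvectorBasis {ι : Type*} [Fintype ι] [DecidableEq ι]
    {A : Matrix ι ι ℝ} (hA : A.IsHermitian) (k : ι) :
    toEuclideanLin A (hA.eigenvectorBasis k) = hA.eigenvalues k • hA.eigenvectorBasis k := by
  ext1
  simp [hA.mulVec_eigenvectorBasis]

variable {n : ℕ} {A : Matrix (Fin n) (Fin n) ℝ} (hA : A.IsHermitian)

theorem exists_finrank_inner_le_eigDesc (m : Fin n) :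
    ∃ V : Submodule ℝ (EuclideanSpace ℝ (Fin n)), n - m ≤ finrank ℝ V ∧
      ∀ x ∈ V, ⟪x, toEuclideanLin A x⟫ ≤ eigDesc A hA m * ‖x‖ ^ 2 := by
  refine ⟨span ℝ (hA.eigenvectorBasis '' ↑({k | hA.eigenvalues k ≤ eigDesc A hA m} : Finset _)),
    ?_, fun x hx => ?_⟩
  · rw [OrthonormalBasis.finrank_span_image]
    exact (by rw [Fin.val_rev]; omega : n - m = m.rev + 1).trans_le
      (Tuple.le_card_filter_le_sort hA.eigenvalues m.rev)
  · exact OrthonormalBasis.inner_apply_self_le_of_mem_span hA.toEuclideanLin_eigenvectorBasis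
      (by simp) hx

theorem exists_finrank_eigDesc_le_inner (m : Fin n) :
    ∃ V : Submodule ℝ (EuclideanSpace ℝ (Fin n)), m + 1 ≤ finrank ℝ V ∧
      ∀ x ∈ V, eigDesc A hA m * ‖x‖ ^ 2 ≤ ⟪x, toEuclideanLin A x⟫ := by
  refine ⟨span ℝ (hA.eigenvectorBasis '' ↑({k | eigDesc A hA m ≤ hA.eigenvalues k} : Finset _)),
    ?_, fun x hx => ?_⟩
  · rw [OrthonormalBasis.finrank_span_image]
    exact (by rw [Fin.val_rev]; omega : m + 1 = n - m.rev).trans_le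
      (Tuple.le_card_filter_sort_le hA.eigenvalues m.rev)
  · exact OrthonormalBasis.mul_norm_sq_le_inner_apply_self_of_mem_span
      hA.toEuclideanLin_eigenvectorBasis (by simp) hx

end Matrix.IsHermitian

/-- Weyl's inequality: λ_{i+j-1}(A+B) ≤ λ_i(A) + λ_j(B) (one-based indices). -/
theorem stmt2 (n : ℕ) (A B : Matrix (Fin n) (Fin n) ℝ)
    (hA : A.IsHermitian) (hB : B.IsHermitian)
    (i j : ℕ) (hi : 1 ≤ i) (hj : 1 ≤ j) (hij : i + j - 1 ≤ n) :
    eigDesc (A + B) (hA.add hB) ⟨i + j - 2, by omega⟩ ≤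
      eigDesc A hA ⟨i - 1, by omega⟩ + eigDesc B hB ⟨j - 1, by omega⟩ := by
  obtain ⟨VA, hVA, hA_le⟩ := hA.exists_finrank_inner_le_eigDesc ⟨i - 1, by omega⟩
  obtain ⟨VB, hVB, hB_le⟩ := hB.exists_finrank_inner_le_eigDesc ⟨j - 1, by omega⟩
  obtain ⟨VC, hVC, hC_ge⟩ := (hA.add hB).exists_finrank_eigDesc_le_inner ⟨i + j - 2, by omega⟩
  obtain ⟨x, ⟨⟨hxA, hxB⟩, hxC⟩, hx⟩ := Submodule.exists_mem_inf_inf_ne_zero VA VB VC <| by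
    simp only [finrank_euclideanSpace_fin] at hVA hVB hVC ⊢
    omega
  refine le_of_mul_le_mul_right ?_ (by positivity : 0 < ‖x‖ ^ 2)
  calc _ ≤ ⟪x, toEuclideanLin (A + B) x⟫ := hC_ge x hxC
    _ = ⟪x, toEuclideanLin A x⟫ + ⟪x, toEuclideanLin B x⟫ := by
      rw [map_add, LinearMap.add_apply, inner_add_right]
    _ ≤ _ := by
      rw [add_mul]
      exact add_le_add (hA_le x hxA) (hB_le x hxB)
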